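/- For k ∈ ℕ let S_k = {0, 1} ∪ {2^(2^i) : 1 ≤ i ≤ k}, a set of k+2 natural numbers. There exist a real constant c > 0 and K ∈ ℕ such that for all k ≥ K one has z_{S_k} ≥ c·√k. -/

import Mathlib

open Real Finset

/-- `g_S(t) = ∑_{e ∈ S} t^(2e)`. -/
noncomputable def gS (S : Finset ℕ) (t : ℝ) : ℝ := ∑ e ∈ S, t ^ (2 * e)

/-- `h_S(t) = ∑_{e ∈ S} e² t^(2e-2)` (the term for `e = 0` being `0`). -/
noncomputable def hS (S : Finset ℕ) (t : ℝ) : ℝ := ∑ e ∈ S, (e : ℝ) ^ 2 * t ^ (2 * e - 2)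

/-- `q_S(t) = ∑_{e ∈ S} e t^(2e-1)` (the term for `e = 0` being `0`). -/
noncomputable def qS (S : Finset ℕ) (t : ℝ) : ℝ := ∑ e ∈ S, (e : ℝ) * t ^ (2 * e - 1)

/-- `E_S(t) = g_S(t) h_S(t) - q_S(t)²`. -/
noncomputable def ES (S : Finset ℕ) (t : ℝ) : ℝ := gS S t * hS S t - qS S t ^ 2

/-- The expected number of real zeros in `(0,1)`, given by the Edelman–Kostlan integral. -/
noncomputable def zS (S : Finset ℕ) : ℝ :=
  (1 / Real.pi) * ∫ t in (0 : ℝ)..1, Real.sqrt (ES S t) / gS S t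


/-!
Let `F_i = 2^(2^i)` and `I_i = [2^(-1/F_i), 2^(-1/(2F_i))]` for `1 ≤ i ≤ k`; these intervals
are disjoint, and `t^(F_i)` runs from `1/2` to `1/√2` on `I_i`. There the exponents
`e = 0, F_1, …, F_(i-1)` satisfy `2e ≤ F_i`, hence `t^(2e) ≥ 1/2`, while the exponents `F_j`,
`j > i`, contribute a geometric tail; so `g ≤ i + 3`. Keeping only the `i` pairs `(e, F_i)` in
Lagrange's identity `2t²E = ∑_{e,f ∈ S} (f - e)² t^(2e) t^(2f)` gives
`E ≥ i F_i² t^(2F_i - 2) / 16`. Thus the integrand `√E / g` is at least `F_i t^(F_i - 1) / (16√i)`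
on `I_i`, and this bound integrates over `I_i` to `(1/√2 - 1/2)/(16√i) ≥ 1/(80√k)`. Summing,
`z_(S_k) ≥ k/(80π√k) ≥ √k/320`.
-/

noncomputable def zSIntegrand (S : Finset ℕ) (t : ℝ) : ℝ := √(ES S t) / gS S t

section General

variable (S : Finset ℕ)

lemma pow_two_mul_nonneg (t : ℝ) (e : ℕ) : 0 ≤ t ^ (2 * e) := by
  rw [pow_mul]; positivity

lemma gS_nonneg (t : ℝ) : 0 ≤ gS S t := sum_nonneg fun e _ => pow_two_mul_nonneg t e

lemma one_le_gS {S : Finset ℕ} (h0 : 0 ∈ S) (t : ℝ) : 1 ≤ gS S t := by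
  simpa [gS] using single_le_sum (f := fun e => t ^ (2 * e)) (fun e _ => pow_two_mul_nonneg t e) h0

lemma sq_mul_hS (t : ℝ) : t ^ 2 * hS S t = ∑ e ∈ S, (e : ℝ) ^ 2 * t ^ (2 * e) := by
  rw [hS, mul_sum]
  refine sum_congr rfl fun e _ => ?_
  rcases Nat.eq_zero_or_pos e with rfl | he
  · simp
  · rw [mul_left_comm, ← pow_add, show 2 + (2 * e - 2) = 2 * e by omega]

lemma mul_qS (t : ℝ) : t * qS S t = ∑ e ∈ S, (e : ℝ) * t ^ (2 * e) := by
  rw [qS, mul_sum]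
  refine sum_congr rfl fun e _ => ?_
  rcases Nat.eq_zero_or_pos e with rfl | he
  · simp
  · rw [mul_left_comm, ← pow_succ', show 2 * e - 1 + 1 = 2 * e by omega]

theorem two_mul_sq_mul_ES (t : ℝ) :
    2 * t ^ 2 * ES S t = ∑ e ∈ S, ∑ f ∈ S, ((f : ℝ) - e) ^ 2 * (t ^ (2 * e) * t ^ (2 * f)) := by
  have expand : ∀ e f : ℕ, ((f : ℝ) - e) ^ 2 * (t ^ (2 * e) * t ^ (2 * f)) =
      t ^ (2 * e) * ((f : ℝ) ^ 2 * t ^ (2 * f))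
        - 2 * ((e : ℝ) * t ^ (2 * e)) * ((f : ℝ) * t ^ (2 * f))
        + (e : ℝ) ^ 2 * t ^ (2 * e) * t ^ (2 * f) := fun e f => by ring
  simp only [expand, sum_add_distrib, sum_sub_distrib, ← mul_sum, ← sum_mul, ← sq_mul_hS,
    ← mul_qS, ES, gS]
  ring

theorem card_mul_sq_mul_pow_le_ES {A : Finset ℕ} {F : ℕ} {t : ℝ} (hF : F ∈ S) (hA : A ⊆ S)
    (hAF : ∀ e ∈ A, 2 * e ≤ F) (ht : ∀ e ∈ A, 1 / 2 ≤ t ^ (2 * e)) :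
    #A * (F : ℝ) ^ 2 * t ^ (2 * F) ≤ 16 * t ^ 2 * ES S t := by
  have term : ∀ e ∈ A, (F : ℝ) ^ 2 / 8 ≤ ((F : ℝ) - e) ^ 2 * t ^ (2 * e) := fun e he => by
    have hFe : (F : ℝ) / 2 ≤ F - e := by
      have : (2 * e : ℝ) ≤ F := by exact_mod_cast hAF e he
      linarith
    have := ht e he
    have : ((F : ℝ) / 2) ^ 2 ≤ ((F : ℝ) - e) ^ 2 := pow_le_pow_left₀ (by positivity) hFe 2
    nlinarith
  have hA_sum : #A * ((F : ℝ) ^ 2 / 8) ≤ ∑ e ∈ A, ((F : ℝ) - e) ^ 2 * t ^ (2 * e) := by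
    simpa using card_nsmul_le_sum A _ _ term
  have hS_sum : (∑ e ∈ A, ((F : ℝ) - e) ^ 2 * t ^ (2 * e)) * t ^ (2 * F) ≤ 2 * t ^ 2 * ES S t := by
    have nonneg : ∀ e f : ℕ, 0 ≤ ((f : ℝ) - e) ^ 2 * (t ^ (2 * e) * t ^ (2 * f)) := fun e f =>
      mul_nonneg (sq_nonneg _) (mul_nonneg (pow_two_mul_nonneg t e) (pow_two_mul_nonneg t f))
    calc (∑ e ∈ A, ((F : ℝ) - e) ^ 2 * t ^ (2 * e)) * t ^ (2 * F)
        = ∑ e ∈ A, ((F : ℝ) - e) ^ 2 * (t ^ (2 * e) * t ^ (2 * F)) := by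
          rw [sum_mul]; exact sum_congr rfl fun e _ => by ring
      _ ≤ ∑ e ∈ S, ((F : ℝ) - e) ^ 2 * (t ^ (2 * e) * t ^ (2 * F)) :=
          sum_le_sum_of_subset_of_nonneg hA fun e _ _ => nonneg e F
      _ ≤ ∑ e ∈ S, ∑ f ∈ S, ((f : ℝ) - e) ^ 2 * (t ^ (2 * e) * t ^ (2 * f)) :=
          sum_le_sum fun e _ => single_le_sum (fun f _ => nonneg e f) hF
      _ = 2 * t ^ 2 * ES S t := (two_mul_sq_mul_ES S t).symm
  nlinarith [pow_two_mul_nonneg t F]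

lemma zSIntegrand_nonneg (t : ℝ) : 0 ≤ zSIntegrand S t :=
  div_nonneg (sqrt_nonneg _) (gS_nonneg S t)

lemma continuous_zSIntegrand {S : Finset ℕ} (h0 : 0 ∈ S) : Continuous (zSIntegrand S) := by
  have hg : Continuous (gS S) := continuous_finsetSum _ fun e _ => continuous_pow _
  have hh : Continuous (hS S) := continuous_finsetSum _ fun e _ => by fun_prop
  have hq : Continuous (qS S) := continuous_finsetSum _ fun e _ => by fun_prop
  exact (continuous_sqrt.comp ((hg.mul hh).sub (hq.pow 2))).div hg
    fun t => (zero_lt_one.trans_le (one_le_gS h0 t)).ne'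

end General

open MeasureTheory intervalIntegral in
theorem sum_integral_le_integral_of_chain {φ : ℝ → ℝ} (hφ : Continuous φ) (hφ0 : ∀ t, 0 ≤ φ t)
    {a b : ℕ → ℝ} (hba : ∀ i, b i ≤ a (i + 1)) (n : ℕ) :
    ∑ i ∈ range n, ∫ t in a i..b i, φ t ≤ ∫ t in a 0..a n, φ t := by
  induction n with
  | zero => simp
  | succ n ih =>
    have hint : ∀ u v, IntervalIntegrable φ volume u v := hφ.intervalIntegrable
    have split₁ := integral_add_adjacent_intervals (hint (a 0) (a n)) (hint _ (b n))
    have split₂ := integral_add_adjacent_intervals (hint (a 0) (b n)) (hint _ (a (n + 1)))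
    have gap := integral_nonneg (μ := volume) (hba n) fun t _ => hφ0 t
    rw [sum_range_succ]
    linarith

section HalfRoot

noncomputable def halfRoot (n : ℕ) : ℝ := (1 / 2 : ℝ) ^ ((n : ℝ)⁻¹)

variable {m n : ℕ}

lemma halfRoot_pos (n : ℕ) : 0 < halfRoot n := by unfold halfRoot; positivity

lemma halfRoot_nonneg (n : ℕ) : 0 ≤ halfRoot n := (halfRoot_pos n).le

lemma halfRoot_le_one (n : ℕ) : halfRoot n ≤ 1 :=
  rpow_le_one (by norm_num) (by norm_num) (by positivity)

lemma halfRoot_pow (hn : n ≠ 0) : halfRoot n ^ n = 1 / 2 :=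
  rpow_inv_natCast_pow (by norm_num) hn

lemma halfRoot_le_halfRoot (hm : m ≠ 0) (hmn : m ≤ n) : halfRoot m ≤ halfRoot n :=
  rpow_le_rpow_of_exponent_ge (by norm_num) (by norm_num)
    (inv_anti₀ (by positivity) (by exact_mod_cast hmn))

lemma half_le_halfRoot_pow (hn : n ≠ 0) (hmn : m ≤ n) : 1 / 2 ≤ halfRoot n ^ m :=
  halfRoot_pow hn ▸ pow_le_pow_of_le_one (halfRoot_nonneg n) (halfRoot_le_one n) hmn

lemma halfRoot_pow_le (hn : n ≠ 0) {p : ℕ} (hp : m * n ≤ p) : halfRoot n ^ p ≤ (1 / 2) ^ m := by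
  calc halfRoot n ^ p ≤ halfRoot n ^ (n * m) :=
        pow_le_pow_of_le_one (halfRoot_nonneg n) (halfRoot_le_one n) (by rwa [mul_comm])
    _ = (1 / 2) ^ m := by rw [pow_mul, halfRoot_pow hn]

lemma seven_tenths_le_halfRoot_two_mul_pow (hn : n ≠ 0) : 7 / 10 ≤ halfRoot (2 * n) ^ n := by
  have hsq : (halfRoot (2 * n) ^ n) ^ 2 = 1 / 2 := by
    rw [← pow_mul, mul_comm, halfRoot_pow (by omega)]
  nlinarith [pow_nonneg (halfRoot_nonneg (2 * n)) n]

end HalfRoot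

section DblExp

def dblExp (i : ℕ) : ℕ := 2 ^ 2 ^ i

def dblExpSet (k : ℕ) : Finset ℕ := {0, 1} ∪ (Icc 1 k).image dblExp

lemma dblExp_succ (i : ℕ) : dblExp (i + 1) = dblExp i ^ 2 := by
  rw [dblExp, dblExp, pow_succ, pow_mul]

lemma two_le_dblExp (i : ℕ) : 2 ≤ dblExp i :=
  Nat.le_self_pow (pow_pos two_pos i).ne' 2

lemma two_mul_dblExp_le_succ (i : ℕ) : 2 * dblExp i ≤ dblExp (i + 1) := by
  rw [dblExp_succ, sq]; exact Nat.mul_le_mul_right _ (two_le_dblExp i)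

lemma dblExp_strictMono : StrictMono dblExp :=
  strictMono_nat_of_lt_succ fun i => by
    have := two_mul_dblExp_le_succ i; have := two_le_dblExp i; omega

lemma succ_mul_dblExp_le (i m : ℕ) : (m + 1) * dblExp i ≤ dblExp (i + m) := by
  induction m with
  | zero => simp
  | succ m ih =>
    have := two_mul_dblExp_le_succ (i + m)
    have := dblExp_strictMono.monotone (Nat.le_add_right i m)
    rw [← add_assoc]; nlinarith

end DblExp

section DblExpSet

variable {i k : ℕ} {t : ℝ}

lemma gS_dblExpSet (k : ℕ) (t : ℝ) :
    gS (dblExpSet k) t = 1 + t ^ 2 + ∑ j ∈ Icc 1 k, t ^ (2 * dblExp j) := by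
  have hdisj : Disjoint ({0, 1} : Finset ℕ) ((Icc 1 k).image dblExp) := by
    simp only [disjoint_left, mem_insert, mem_singleton, mem_image, not_exists, not_and]
    rintro _ (rfl | rfl) j _ hj <;> linarith [two_le_dblExp j]
  rw [gS, dblExpSet, sum_union hdisj, sum_pair zero_ne_one,
    sum_image dblExp_strictMono.injective.injOn]
  simp

lemma sum_Ico_pow_dblExp_le (ht0 : 0 ≤ t) (ht : t ≤ halfRoot (2 * dblExp i)) (n : ℕ) :
    ∑ j ∈ Ico (i + 1) n, t ^ (2 * dblExp j) ≤ 1 / 2 := by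
  have hF : 2 * dblExp i ≠ 0 := by have := two_le_dblExp i; omega
  have term : ∀ m, t ^ (2 * dblExp (i + 1 + m)) ≤ (1 / 2) ^ (m + 2) := fun m =>
    calc t ^ (2 * dblExp (i + 1 + m)) ≤ halfRoot (2 * dblExp i) ^ (2 * dblExp (i + 1 + m)) :=
          pow_le_pow_left₀ ht0 ht _
      _ ≤ (1 / 2) ^ (m + 2) := halfRoot_pow_le hF (by
          have := succ_mul_dblExp_le i (m + 1)
          rw [show i + (m + 1) = i + 1 + m by ring] at this
          linarith)
  calc ∑ j ∈ Ico (i + 1) n, t ^ (2 * dblExp j)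
      = ∑ m ∈ range (n - (i + 1)), t ^ (2 * dblExp (i + 1 + m)) := sum_Ico_eq_sum_range _ _ _
    _ ≤ ∑ m ∈ range (n - (i + 1)), (1 / 2 : ℝ) ^ m * (1 / 4) :=
        sum_le_sum fun m _ => (term m).trans_eq (by ring)
    _ ≤ 2 * (1 / 4) := by rw [← sum_mul]; gcongr; exact sum_geometric_two_le _
    _ = 1 / 2 := by norm_num

lemma gS_dblExpSet_le (hik : i ≤ k) (ht0 : 0 ≤ t) (ht : t ≤ halfRoot (2 * dblExp i)) :
    gS (dblExpSet k) t ≤ i + 3 := by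
  have ht1 : t ≤ 1 := ht.trans (halfRoot_le_one _)
  have head : ∑ j ∈ Ico 1 (i + 1), t ^ (2 * dblExp j) ≤ i := by
    calc ∑ j ∈ Ico 1 (i + 1), t ^ (2 * dblExp j) ≤ ∑ j ∈ Ico 1 (i + 1), (1 : ℝ) :=
          sum_le_sum fun j _ => pow_le_one₀ ht0 ht1
      _ = i := by simp
  have tail := sum_Ico_pow_dblExp_le ht0 ht (k + 1)
  rw [gS_dblExpSet, ← Ico_add_one_right_eq_Icc,
    ← sum_Ico_consecutive _ (Nat.le_add_left 1 i) (by omega : i + 1 ≤ k + 1)]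
  linarith [pow_le_one₀ ht0 ht1 (n := 2)]

lemma sqrt_mul_pow_le_sqrt_ES (hi : 1 ≤ i) (hik : i ≤ k) (ht : halfRoot (dblExp i) ≤ t) :
    √i * dblExp i * t ^ (dblExp i - 1) / 4 ≤ √(ES (dblExpSet k) t) := by
  set F := dblExp i
  have hF : F ≠ 0 := by have := two_le_dblExp i; omega
  have ht0 : 0 < t := (halfRoot_pos F).trans_le ht
  set A := insert 0 ((Ico 1 i).image dblExp)
  have hA : #A = i := by
    rw [card_insert_of_notMem (by simp [dblExp]),
      card_image_of_injective _ dblExp_strictMono.injective, Nat.card_Ico]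
    omega
  have hAS : A ⊆ dblExpSet k := by
    refine insert_subset (by simp [dblExpSet]) fun e he => ?_
    obtain ⟨j, hj, rfl⟩ := mem_image.mp he
    simp only [mem_Ico] at hj
    exact mem_union_right _ (mem_image_of_mem _ (mem_Icc.mpr ⟨hj.1, by omega⟩))
  have hAF : ∀ e ∈ A, 2 * e ≤ F := by
    intro e he
    rcases mem_insert.mp he with rfl | he
    · simp
    obtain ⟨j, hj, rfl⟩ := mem_image.mp he
    exact (two_mul_dblExp_le_succ j).trans
      (dblExp_strictMono.monotone (by simp only [mem_Ico] at hj; omega))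
  have hAt : ∀ e ∈ A, 1 / 2 ≤ t ^ (2 * e) := fun e he =>
    (half_le_halfRoot_pow hF (hAF e he)).trans (pow_le_pow_left₀ (halfRoot_nonneg F) ht _)
  have hFS : F ∈ dblExpSet k := mem_union_right _ (mem_image_of_mem _ (mem_Icc.mpr ⟨hi, hik⟩))
  have key := card_mul_sq_mul_pow_le_ES _ hFS hAS hAF hAt
  have hpow : t ^ (2 * F) = t ^ 2 * (t ^ (F - 1)) ^ 2 := by
    rw [← pow_mul, ← pow_add]; congr 1; omega
  rw [hA, hpow] at key
  have key' : (i : ℝ) * F ^ 2 * (t ^ (F - 1)) ^ 2 ≤ 16 * ES (dblExpSet k) t := by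
    have ht2 : 0 < t ^ 2 := by positivity
    nlinarith
  refine le_sqrt_of_sq_le ?_
  rw [div_pow, mul_pow, mul_pow, sq_sqrt (by positivity)]
  linarith

lemma le_zSIntegrand_dblExpSet (hi : 1 ≤ i) (hik : i ≤ k)
    (hta : halfRoot (dblExp i) ≤ t) (htb : t ≤ halfRoot (2 * dblExp i)) :
    dblExp i * t ^ (dblExp i - 1) / (16 * √i) ≤ zSIntegrand (dblExpSet k) t := by
  have hg0 : 0 < gS (dblExpSet k) t := zero_lt_one.trans_le (one_le_gS (by simp [dblExpSet]) t)
  have hg : gS (dblExpSet k) t ≤ 4 * i := by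
    have : (1 : ℝ) ≤ i := by exact_mod_cast hi
    linarith [gS_dblExpSet_le hik ((halfRoot_nonneg _).trans hta) htb]
  have hE := sqrt_mul_pow_le_sqrt_ES hi hik hta
  calc (dblExp i : ℝ) * t ^ (dblExp i - 1) / (16 * √i)
      = √i * dblExp i * t ^ (dblExp i - 1) / 4 / (4 * i) := by
        field_simp; rw [sq_sqrt (Nat.cast_nonneg _)]; ring
    _ ≤ √(ES (dblExpSet k) t) / gS (dblExpSet k) t :=
        div_le_div₀ (sqrt_nonneg _) hE hg0 hg

lemma inv_eighty_sqrt_le_integral (hi : 1 ≤ i) (hik : i ≤ k) :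
    1 / (80 * √i) ≤
      ∫ t in halfRoot (dblExp i)..halfRoot (2 * dblExp i), zSIntegrand (dblExpSet k) t := by
  set F := dblExp i
  have hF : F ≠ 0 := by have := two_le_dblExp i; omega
  have hab : halfRoot F ≤ halfRoot (2 * F) := halfRoot_le_halfRoot hF (by omega)
  have monomial : ∫ t in halfRoot F..halfRoot (2 * F), (F : ℝ) * t ^ (F - 1)
      = halfRoot (2 * F) ^ F - halfRoot F ^ F :=
    intervalIntegral.integral_eq_sub_of_hasDerivAt (fun t _ => hasDerivAt_pow F t)
      ((by fun_prop : Continuous fun t : ℝ => (F : ℝ) * t ^ (F - 1)).intervalIntegrable _ _)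
  have hsi : 0 < √(i : ℝ) := sqrt_pos.mpr (by exact_mod_cast hi)
  calc 1 / (80 * √i) ≤ (halfRoot (2 * F) ^ F - halfRoot F ^ F) / (16 * √i) := by
        rw [halfRoot_pow hF, div_le_div_iff₀ (by positivity) (by positivity)]
        nlinarith [seven_tenths_le_halfRoot_two_mul_pow hF]
    _ = ∫ t in halfRoot F..halfRoot (2 * F), F * t ^ (F - 1) / (16 * √i) := by
        rw [intervalIntegral.integral_div, monomial]
    _ ≤ _ := intervalIntegral.integral_mono_on hab
        ((by fun_prop : Continuous fun t : ℝ => F * t ^ (F - 1) / (16 * √i)).intervalIntegrable _ _)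
        ((continuous_zSIntegrand (by simp [dblExpSet])).intervalIntegrable _ _)
        fun t ht => le_zSIntegrand_dblExpSet hi hik ht.1 ht.2

end DblExpSet

theorem sqrt_div_eighty_le_integral_zSIntegrand (k : ℕ) :
    √k / 80 ≤ ∫ t in (0 : ℝ)..1, zSIntegrand (dblExpSet k) t := by
  set φ := zSIntegrand (dblExpSet k)
  have hφ : Continuous φ := continuous_zSIntegrand (by simp [dblExpSet])
  have term : ∀ i ∈ range k,
      1 / (80 * √k) ≤ ∫ t in halfRoot (dblExp (i + 1))..halfRoot (2 * dblExp (i + 1)), φ t :=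
    fun i hi => by
      have hik : i + 1 ≤ k := mem_range.mp hi
      refine le_trans ?_ (inv_eighty_sqrt_le_integral (by omega) hik)
      gcongr
  have chain := sum_integral_le_integral_of_chain hφ (zSIntegrand_nonneg _)
    (a := fun i => halfRoot (dblExp (i + 1))) (b := fun i => halfRoot (2 * dblExp (i + 1)))
    (fun i => halfRoot_le_halfRoot (by have := two_le_dblExp (i + 1); omega)
      (two_mul_dblExp_le_succ (i + 1))) k
  have inside :
      ∫ t in halfRoot (dblExp 1)..halfRoot (dblExp (k + 1)), φ t ≤ ∫ t in (0 : ℝ)..1, φ t :=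
    intervalIntegral.integral_mono_interval (halfRoot_nonneg _)
      (halfRoot_le_halfRoot (by have := two_le_dblExp 1; omega)
        (dblExp_strictMono.monotone (by omega)))
      (halfRoot_le_one _) (Filter.Eventually.of_forall (zSIntegrand_nonneg _))
      (hφ.intervalIntegrable _ _)
  have sum_const : ∑ _i ∈ range k, 1 / (80 * √(k : ℝ)) = √k / 80 := by
    rw [sum_const, card_range, nsmul_eq_mul]
    conv_rhs => rw [← div_sqrt]
    ring
  calc √k / 80 = ∑ _i ∈ range k, 1 / (80 * √(k : ℝ)) := sum_const.symm
    _ ≤ _ := sum_le_sum term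
    _ ≤ _ := chain
    _ ≤ _ := inside

theorem stmt1 :
    ∃ c : ℝ, c > 0 ∧ ∃ K : ℕ, ∀ k : ℕ, K ≤ k →
      zS ({0, 1} ∪ (Finset.Icc 1 k).image (fun i => 2 ^ (2 ^ i))) ≥ c * Real.sqrt k := by
  refine ⟨1 / 320, by norm_num, 0, fun k _ => ?_⟩
  calc 1 / 320 * √k = 1 / 4 * (√k / 80) := by ring
    _ ≤ 1 / π * (√k / 80) := by gcongr; exact pi_le_four
    _ ≤ 1 / π * ∫ t in (0 : ℝ)..1, zSIntegrand (dblExpSet k) t := by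
        gcongr; exact sqrt_div_eighty_le_integral_zSIntegrand k
    _ = zS (dblExpSet k) := rfl
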